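/- arXiv:1904.01474 — 5 statements merged into one kernel-verified Lean document; each statement's English description precedes it below -/
import Mathlib

section
/- Let ((J_k, K_k))_{k≥1} be an i.i.d. sequence of pairs of real-valued random variables. Then for every n ≥ 1, the backward weighted sum S̃_n := Σ_{k=1}^{n} (∏_{i=k+1}^{n} J_i)² K_k and the forward weighted sum S_n := Σ_{k=1}^{n} (∏_{i=1}^{k-1} J_i)² K_k have the same distribution. -/
/-! For an i.i.d. sequence the vectors `(X₀, …, X_{n-1})` and `(X_{n-1}, …, X₀)` have the same
law, the product of `n` copies of the common law. The backward sum is a fixed measurable function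
of the first vector, and the same function of the reversed vector is the forward sum. -/

open MeasureTheory ProbabilityTheory Finset

theorem ProbabilityTheory.iIndepFun.identDistrib_reindex {Ω κ ι E : Type*} [MeasurableSpace Ω]
    [MeasurableSpace E] [Fintype ι] {μ : Measure Ω} [IsProbabilityMeasure μ] {X : κ → Ω → E}
    (hX : ∀ k, Measurable (X k)) (hindep : iIndepFun X μ) {k₀ : κ}
    (hident : ∀ k, IdentDistrib (X k) (X k₀) μ μ) {σ τ : ι → κ} (hσ : σ.Injective)
    (hτ : τ.Injective) :
    IdentDistrib (fun ω i => X (σ i) ω) (fun ω i => X (τ i) ω) μ μ := by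
  have law {σ : ι → κ} (hσ : σ.Injective) :
      μ.map (fun ω i => X (σ i) ω) = Measure.pi fun _ => μ.map (X k₀) := by
    rw [(hindep.precomp hσ).map_fun_eq_pi_map fun i => (hX (σ i)).aemeasurable]
    simp only [(hident _).map_eq]
  exact ⟨by fun_prop, by fun_prop, (law hσ).trans (law hτ).symm⟩

section WeightedSum

variable {R : Type*} [CommSemiring R] {n : ℕ}

def backwardWeightedSum (v : Fin n → R × R) : R :=
  ∑ k, (∏ i ∈ Ioi k, (v i).1) ^ 2 * (v k).2

def forwardWeightedSum (v : Fin n → R × R) : R :=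
  ∑ k, (∏ i ∈ Iio k, (v i).1) ^ 2 * (v k).2

theorem forwardWeightedSum_eq_backwardWeightedSum_rev (v : Fin n → R × R) :
    forwardWeightedSum v = backwardWeightedSum (v ∘ Fin.rev) := by
  refine (Fintype.sum_equiv Fin.revPerm _ _ fun k => ?_).symm
  rw [Fin.revPerm_apply, ← Fin.map_revPerm_Ioi, prod_map]
  rfl

theorem backwardWeightedSum_eq_sum_range (u : ℕ → R × R) :
    backwardWeightedSum (fun i : Fin n => u i) =
      ∑ k ∈ range n, (∏ i ∈ Ico (k + 1) n, (u i).1) ^ 2 * (u k).2 := by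
  rw [backwardWeightedSum, ← Fin.sum_univ_eq_sum_range]
  congr! 3 with k
  rw [Ico_add_one_left_eq_Ioo, ← Fin.map_valEmbedding_Ioi, prod_map]
  rfl

theorem forwardWeightedSum_eq_sum_range (u : ℕ → R × R) :
    forwardWeightedSum (fun i : Fin n => u i) =
      ∑ k ∈ range n, (∏ i ∈ range k, (u i).1) ^ 2 * (u k).2 := by
  rw [forwardWeightedSum, ← Fin.sum_univ_eq_sum_range]
  congr! 3 with k
  rw [← Nat.Iio_eq_range, ← Fin.map_valEmbedding_Iio, prod_map]
  rfl

@[fun_prop]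
theorem measurable_backwardWeightedSum : Measurable (backwardWeightedSum : (Fin n → ℝ × ℝ) → ℝ) := by
  unfold backwardWeightedSum
  fun_prop

end WeightedSum

theorem stmt0_general {Ω : Type*} [MeasurableSpace Ω] (μ : Measure Ω) [IsProbabilityMeasure μ]
    (J K : ℕ → Ω → ℝ)
    (hmeas : ∀ k, Measurable fun ω => (J k ω, K k ω))
    (hindep : iIndepFun (fun k ω => (J k ω, K k ω)) μ)
    (hident : ∀ k, IdentDistrib (fun ω => (J k ω, K k ω)) (fun ω => (J 0 ω, K 0 ω)) μ μ)
    (n : ℕ) :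
    IdentDistrib
      (fun ω => ∑ k ∈ Finset.range n, (∏ i ∈ Finset.Ico (k + 1) n, J i ω) ^ 2 * K k ω)
      (fun ω => ∑ k ∈ Finset.range n, (∏ i ∈ Finset.range k, J i ω) ^ 2 * K k ω) μ μ := by
  have hrev := hindep.identDistrib_reindex hmeas hident (σ := fun i : Fin n => (i : ℕ))
    (τ := fun i => (i.rev : ℕ)) Fin.val_injective (Fin.val_injective.comp Fin.rev_injective)
  convert hrev.comp measurable_backwardWeightedSum using 1 <;> funext ω
  · exact (backwardWeightedSum_eq_sum_range fun i => (J i ω, K i ω)).symm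
  · rw [← forwardWeightedSum_eq_sum_range fun i => (J i ω, K i ω),
      forwardWeightedSum_eq_backwardWeightedSum_rev]
    rfl

/-- For an i.i.d. sequence of pairs `(J_k, K_k)` of real random variables,
for every `n ≥ 1` the backward weighted sum
`S̃_n = Σ_{k=1}^{n} (∏_{i=k+1}^{n} J_i)² K_k`
and the forward weighted sum
`S_n = Σ_{k=1}^{n} (∏_{i=1}^{k-1} J_i)² K_k`
have the same distribution.  (Indices are shifted by one: the Lean index `k : ℕ`
corresponds to the paper index `k + 1`.) -/
theorem stmt0 {Ω : Type*} [MeasurableSpace Ω] (μ : Measure Ω) [IsProbabilityMeasure μ]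
    (J K : ℕ → Ω → ℝ)
    (hmeas : ∀ k, Measurable fun ω => (J k ω, K k ω))
    (hindep : iIndepFun (fun k ω => (J k ω, K k ω)) μ)
    (hident : ∀ k, IdentDistrib (fun ω => (J k ω, K k ω)) (fun ω => (J 0 ω, K 0 ω)) μ μ)
    (n : ℕ) (hn : 1 ≤ n) :
    IdentDistrib
      (fun ω => ∑ k ∈ Finset.range n, (∏ i ∈ Finset.Ico (k + 1) n, J i ω) ^ 2 * K k ω)
      (fun ω => ∑ k ∈ Finset.range n, (∏ i ∈ Finset.range k, J i ω) ^ 2 * K k ω) μ μ :=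
  stmt0_general μ J K hmeas hindep hident n
end

section
/- Let ((J_k, K_k, L_k))_{k≥1} be an i.i.d. sequence of triples of real random variables with L_k > 0 almost surely. Define τ_0 = 0, τ_n = L_1 + ⋯ + L_n, and g_t = sup{n ≥ 0 : τ_n ≤ t} for t ≥ 0. Then for every t ≥ 0, the random variables S̃_{g_t} and S_{g_t} have the same distribution, where S̃_n := Σ_{k=1}^{n} (∏_{i=k+1}^{n} J_i)² K_k and S_n := Σ_{k=1}^{n} (∏_{i=1}^{k-1} J_i)² K_k. -/
/-!
On the event `{g_t = n}` both variables only involve the first `n` triples: they are `S̃_n` and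
`S_n`. Reversing the order of the first `n` triples preserves the i.i.d. law of the sequence,
turns `S̃_n` into `S_n`, and fixes every partial sum `τ_m` with `m ≥ n`. For `n ≥ 1` the event
`{g_t = n} = {τ_n ≤ t < τ_m for all m > n}` depends only on these partial sums, and on
`{g_t = 0}` both sums are empty, so the two laws agree fibre by fibre.
-/

open MeasureTheory ProbabilityTheory Filter

/-- The renewal counting variable `g_t = sup { n : τ_n ≤ t }` where
`τ_n = L_1 + ⋯ + L_n` (with `τ_0 = 0`); here `L k` denotes the paper's `L_{k+1}`. -/
noncomputable def renewalCount (L : ℕ → ℝ) (t : ℝ) : ℕ :=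
  sSup {n : ℕ | ∑ k ∈ Finset.range n, L k ≤ t}

open Finset

section Gluing

variable {α β : Type*} [MeasurableSpace α] [MeasurableSpace β]

lemma measurable_nat_indexed {F : ℕ → α → β} (hF : ∀ n, Measurable (F n))
    {N : α → ℕ} (hN : Measurable N) : Measurable fun x => F (N x) x :=
  (measurable_from_prod_countable_left (f := fun p : α × ℕ => F p.2 p.1) hF).comp
    (measurable_id.prodMk hN)

lemma MeasureTheory.Measure.map_nat_indexed_eq_of_restrict_fibers {P : Measure α} {N : α → ℕ}
    (hN : Measurable N) {F G : ℕ → α → β} (hF : ∀ n, Measurable (F n)) (hG : ∀ n, Measurable (G n))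
    (h : ∀ n, (P.restrict (N ⁻¹' {n})).map (F n) = (P.restrict (N ⁻¹' {n})).map (G n)) :
    P.map (fun x => F (N x) x) = P.map (fun x => G (N x) x) := by
  have hfibers : P = Measure.sum fun n => P.restrict (N ⁻¹' {n}) := by
    rw [← Measure.restrict_iUnion (fun m n hmn => (Set.disjoint_singleton.2 hmn).preimage N)
      (fun n => hN (measurableSet_singleton n)), ← Set.preimage_iUnion, Set.iUnion_of_singleton,
      Set.preimage_univ, Measure.restrict_univ]
  have hfiber (H : ℕ → α → β) (n : ℕ) :
      (P.restrict (N ⁻¹' {n})).map (fun x => H (N x) x) =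
        (P.restrict (N ⁻¹' {n})).map (H n) := by
    refine Measure.map_congr ?_
    filter_upwards [ae_restrict_mem (hN (measurableSet_singleton n))] with x (hx : N x = n)
    rw [hx]
  rw [hfibers, Measure.map_sum (measurable_nat_indexed hF hN).aemeasurable,
    Measure.map_sum (measurable_nat_indexed hG hN).aemeasurable]
  simp only [hfiber, h]

lemma MeasureTheory.MeasurePreserving.map_restrict_comp_of_preimage_eq {P : Measure α}
    {T : α → α} (hT : MeasurePreserving T P P) {A : Set α} (hA : MeasurableSet A)
    (hTA : T ⁻¹' A = A) {f : α → β} (hf : Measurable f) :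
    (P.restrict A).map (f ∘ T) = (P.restrict A).map f := by
  rw [← Measure.map_map hf hT.measurable]
  conv_lhs => rw [← hTA]
  rw [(hT.restrict_preimage hA).map_eq]

end Gluing

def rangeReflect (n : ℕ) : Equiv.Perm ℕ :=
  Function.Involutive.toPerm (fun k => if k < n then n - 1 - k else k) fun k => by
    dsimp only
    split_ifs <;> omega

lemma rangeReflect_of_lt {n k : ℕ} (h : k < n) : rangeReflect n k = n - 1 - k := if_pos h

lemma rangeReflect_of_le {n k : ℕ} (h : n ≤ k) : rangeReflect n k = k := if_neg (by omega)

lemma sum_range_comp_rangeReflect {M : Type*} [AddCommMonoid M] (f : ℕ → M) {n m : ℕ}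
    (h : n ≤ m) : ∑ k ∈ range m, f (rangeReflect n k) = ∑ k ∈ range m, f k := by
  refine Equiv.Perm.sum_comp _ _ _ fun k hk => ?_
  rw [coe_range, Set.mem_Iio]
  by_contra hkm
  exact hk (rangeReflect_of_le (by omega))

-- The paper's `S_n` and `S̃_n`, with `J` as `a` and `K` as `c`.
def forwardSum (a c : ℕ → ℝ) (n : ℕ) : ℝ :=
  ∑ k ∈ range n, (∏ i ∈ range k, a i) ^ 2 * c k

def backwardSum (a c : ℕ → ℝ) (n : ℕ) : ℝ :=
  ∑ k ∈ range n, (∏ i ∈ Ico (k + 1) n, a i) ^ 2 * c k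

lemma prod_Ico_comp_rangeReflect (a : ℕ → ℝ) {n k : ℕ} (hk : k < n) :
    ∏ i ∈ Ico (k + 1) n, a (rangeReflect n i) = ∏ i ∈ range (n - 1 - k), a i := by
  refine prod_nbij' (fun i => n - 1 - i) (fun j => n - 1 - j) ?_ ?_ ?_ ?_ ?_ <;>
    intros <;> simp_all [rangeReflect_of_lt] <;> omega

lemma backwardSum_comp_rangeReflect (a c : ℕ → ℝ) (n : ℕ) :
    backwardSum (a ∘ rangeReflect n) (c ∘ rangeReflect n) n = forwardSum a c n := by
  rw [backwardSum, forwardSum, ← sum_range_reflect (fun k => (∏ i ∈ range k, a i) ^ 2 * c k)]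
  refine sum_congr rfl fun k hk => ?_
  rw [mem_range] at hk
  simp only [Function.comp_apply, prod_Ico_comp_rangeReflect a hk, rangeReflect_of_lt hk]

section RenewalCount

variable {L L' : ℕ → ℝ} {t : ℝ} {n : ℕ}

lemma renewalCount_eq_iff (hn : n ≠ 0) :
    renewalCount L t = n ↔
      ∑ k ∈ range n, L k ≤ t ∧ ∀ m, n < m → t < ∑ k ∈ range m, L k := by
  rw [renewalCount]
  set S := {m : ℕ | ∑ k ∈ range m, L k ≤ t}
  constructor
  · intro h
    -- `sSup` of an empty or unbounded set of naturals is `0`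
    have hS : S.Nonempty ∧ BddAbove S := by
      by_contra hS
      rcases not_and_or.1 hS with hS | hS
      · exact hn (by rw [← h, Set.not_nonempty_iff_eq_empty.1 hS, csSup_empty, Nat.bot_eq_zero])
      · exact hn (by rw [← h, Nat.sSup_of_not_bddAbove hS])
    subst h
    exact ⟨Nat.sSup_mem hS.1 hS.2,
      fun m hm => not_le.1 fun hmS => (le_csSup hS.2 hmS).not_gt hm⟩
  · rintro ⟨hnS, hub⟩
    have hnub : n ∈ upperBounds S := fun m hm => not_lt.1 fun hnm => (hub m hnm).not_ge hm
    exact le_antisymm (csSup_le ⟨n, hnS⟩ hnub) (le_csSup ⟨n, hnub⟩ hnS)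

lemma renewalCount_eq_iff_of_sum_eq
    (h : ∀ m, n ≤ m → ∑ k ∈ range m, L k = ∑ k ∈ range m, L' k) :
    renewalCount L t = n ↔ renewalCount L' t = n := by
  rcases eq_or_ne n 0 with rfl | hn
  · simp only [renewalCount, h _ (Nat.zero_le _)]
  · rw [renewalCount_eq_iff hn, renewalCount_eq_iff hn, h n le_rfl]
    exact and_congr_right' (forall₂_congr fun m hm => by rw [h m hm.le])

lemma measurableSet_renewalCount_eq_of_ne_zero (t : ℝ) (hn : n ≠ 0) :
    MeasurableSet {L : ℕ → ℝ | renewalCount L t = n} := by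
  have hsum (m : ℕ) : Measurable fun L : ℕ → ℝ => ∑ k ∈ range m, L k := by fun_prop
  simp only [renewalCount_eq_iff hn, Set.ofPred_and, Set.ofPred_forall]
  exact (measurableSet_le (hsum n) measurable_const).inter
    (.iInter fun m => .iInter fun _ => measurableSet_lt measurable_const (hsum m))

lemma measurable_renewalCount (t : ℝ) : Measurable fun L : ℕ → ℝ => renewalCount L t := by
  refine measurable_to_countable' fun n => ?_
  rcases eq_or_ne n 0 with rfl | hn
  · have hzero : (fun L => renewalCount L t) ⁻¹' {0} =
        ⋂ m : ℕ, {L | renewalCount L t = m + 1}ᶜ := by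
      ext L
      simp only [Set.mem_preimage, Set.mem_singleton_iff, Set.mem_iInter, Set.mem_compl_iff,
        Set.mem_ofPred_eq]
      exact ⟨fun h m => by omega,
        fun h => by_contra fun h0 => h _ (Nat.succ_pred_eq_of_ne_zero h0).symm⟩
    rw [hzero]
    exact .iInter fun m => (measurableSet_renewalCount_eq_of_ne_zero t m.succ_ne_zero).compl
  · exact measurableSet_renewalCount_eq_of_ne_zero t hn

end RenewalCount

lemma measurePreserving_comp_perm_infinitePi {ι E : Type*} [MeasurableSpace E] (ν : Measure E)
    [IsProbabilityMeasure ν] (σ : Equiv.Perm ι) :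
    MeasurePreserving (fun x : ι → E => x ∘ σ) (Measure.infinitePi fun _ => ν)
      (Measure.infinitePi fun _ => ν) := by
  refine ⟨by fun_prop, ?_⟩
  convert Measure.infinitePi_map_piCongrLeft (fun _ : ι => ν) σ.symm using 2
  ext x i
  simp [MeasurableEquiv.coe_piCongrLeft, Equiv.piCongrLeft_apply_eq_cast]

lemma measurable_backwardSum (n : ℕ) :
    Measurable fun x : ℕ → ℝ × ℝ × ℝ =>
      backwardSum (fun i => (x i).1) (fun i => (x i).2.1) n := by
  unfold backwardSum; fun_prop

lemma measurable_forwardSum (n : ℕ) :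
    Measurable fun x : ℕ → ℝ × ℝ × ℝ =>
      forwardSum (fun i => (x i).1) (fun i => (x i).2.1) n := by
  unfold forwardSum; fun_prop

theorem map_backwardSum_renewalCount_eq_map_forwardSum {P : Measure (ℕ → ℝ × ℝ × ℝ)}
    (hP : ∀ n, MeasurePreserving (fun x => x ∘ rangeReflect n) P P) (t : ℝ) :
    P.map (fun x => backwardSum (fun i => (x i).1) (fun i => (x i).2.1)
        (renewalCount (fun i => (x i).2.2) t)) =
      P.map (fun x => forwardSum (fun i => (x i).1) (fun i => (x i).2.1)
        (renewalCount (fun i => (x i).2.2) t)) := by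
  set N := fun x : ℕ → ℝ × ℝ × ℝ => renewalCount (fun i => (x i).2.2) t
  have hN : Measurable N := (measurable_renewalCount t).comp (by fun_prop)
  refine Measure.map_nat_indexed_eq_of_restrict_fibers hN measurable_backwardSum
    measurable_forwardSum fun n => ?_
  have hfiber : (fun x => x ∘ rangeReflect n) ⁻¹' (N ⁻¹' {n}) = N ⁻¹' {n} := by
    ext x
    exact renewalCount_eq_iff_of_sum_eq fun m hm =>
      sum_range_comp_rangeReflect (fun k => (x k).2.2) hm
  rw [← (hP n).map_restrict_comp_of_preimage_eq (hN (measurableSet_singleton n)) hfiber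
    (measurable_backwardSum n)]
  exact congrArg (Measure.map · _) (funext fun x =>
    backwardSum_comp_rangeReflect (fun i => (x i).1) (fun i => (x i).2.1) n)

theorem stmt1_general {Ω : Type*} [MeasurableSpace Ω] (μ : Measure Ω) [IsProbabilityMeasure μ]
    (J K L : ℕ → Ω → ℝ)
    (hmeas : ∀ k, Measurable fun ω => (J k ω, K k ω, L k ω))
    (hindep : iIndepFun (fun k ω => (J k ω, K k ω, L k ω)) μ)
    (hident : ∀ k, IdentDistrib (fun ω => (J k ω, K k ω, L k ω))
      (fun ω => (J 0 ω, K 0 ω, L 0 ω)) μ μ)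
    (t : ℝ) :
    IdentDistrib
      (fun ω => ∑ k ∈ Finset.range (renewalCount (fun i => L i ω) t),
        (∏ i ∈ Finset.Ico (k + 1) (renewalCount (fun i => L i ω) t), J i ω) ^ 2 * K k ω)
      (fun ω => ∑ k ∈ Finset.range (renewalCount (fun i => L i ω) t),
        (∏ i ∈ Finset.range k, J i ω) ^ 2 * K k ω) μ μ := by
  set X : Ω → ℕ → ℝ × ℝ × ℝ := fun ω k => (J k ω, K k ω, L k ω)
  have hX : Measurable X := measurable_pi_lambda _ hmeas
  have hlaw : μ.map X = Measure.infinitePi fun _ => μ.map (X · 0) := by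
    rw [hindep.map_fun_eq_infinitePi_map hmeas]
    exact congrArg _ (funext fun k => (hident k).map_eq)
  have hN : Measurable fun x : ℕ → ℝ × ℝ × ℝ => renewalCount (fun i => (x i).2.2) t :=
    (measurable_renewalCount t).comp (by fun_prop)
  have hF := measurable_nat_indexed measurable_backwardSum hN
  have hG := measurable_nat_indexed measurable_forwardSum hN
  have : IsProbabilityMeasure (μ.map (X · 0)) :=
    Measure.isProbabilityMeasure_map (hmeas 0).aemeasurable
  have hreflect (n : ℕ) : MeasurePreserving (· ∘ rangeReflect n) (μ.map X) (μ.map X) :=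
    hlaw ▸ measurePreserving_comp_perm_infinitePi _ _
  refine ⟨(hF.comp hX).aemeasurable, (hG.comp hX).aemeasurable, ?_⟩
  have hseq := map_backwardSum_renewalCount_eq_map_forwardSum hreflect t
  rwa [Measure.map_map hF hX, Measure.map_map hG hX] at hseq

/-- For an i.i.d. sequence of triples `(J_k, K_k, L_k)` of real random
variables with `L_k > 0` a.s., and the renewal counting variable
`g_t = sup {n ≥ 0 : τ_n ≤ t}` with `τ_n = L_1 + ⋯ + L_n`, for every `t ≥ 0` the random
variables `S̃_{g_t}` and `S_{g_t}` have the same distribution, where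
`S̃_n = Σ_{k=1}^{n} (∏_{i=k+1}^{n} J_i)² K_k` and `S_n = Σ_{k=1}^{n} (∏_{i=1}^{k-1} J_i)² K_k`.
(Lean index `k` corresponds to the paper index `k + 1`.) -/
theorem stmt1 {Ω : Type*} [MeasurableSpace Ω] (μ : Measure Ω) [IsProbabilityMeasure μ]
    (J K L : ℕ → Ω → ℝ)
    (hmeas : ∀ k, Measurable fun ω => (J k ω, K k ω, L k ω))
    (hindep : iIndepFun (fun k ω => (J k ω, K k ω, L k ω)) μ)
    (hident : ∀ k, IdentDistrib (fun ω => (J k ω, K k ω, L k ω))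
      (fun ω => (J 0 ω, K 0 ω, L 0 ω)) μ μ)
    (hLpos : ∀ k, ∀ᵐ ω ∂μ, 0 < L k ω)
    (t : ℝ) (ht : 0 ≤ t) :
    IdentDistrib
      (fun ω => ∑ k ∈ Finset.range (renewalCount (fun i => L i ω) t),
        (∏ i ∈ Finset.Ico (k + 1) (renewalCount (fun i => L i ω) t), J i ω) ^ 2 * K k ω)
      (fun ω => ∑ k ∈ Finset.range (renewalCount (fun i => L i ω) t),
        (∏ i ∈ Finset.range k, J i ω) ^ 2 * K k ω) μ μ :=
  stmt1_general μ J K L hmeas hindep hident t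
end

section
/- Let ((J_k, K_k))_{k≥1} be an i.i.d. sequence of pairs of real random variables with J_k > 0 almost surely, K_k ≥ 0 almost surely, E[log J₁] < 0 and E[log⁺ K₁] < ∞. Then the series S_∞ := Σ_{k=1}^{∞} (∏_{i=1}^{k-1} J_i²) K_k converges almost surely to a finite random variable; moreover, writing S'_∞ := Σ_{k=1}^{∞} (∏_{i=1}^{k-1} J_{i+1}²) K_{k+1}, one has S_∞ = K₁ + J₁² S'_∞ almost surely, S'_∞ has the same distribution as S_∞, and S'_∞ is independent of (J₁, K₁); in particular the law of S_∞ solves the distributional fixed-point equation Z =d A Z + B with (A, B) := (J₁², K₁) and Z independent of (A, B). -/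
/-!
By the strong law of large numbers, `(1/n) ∑_{i<n} log J_i → E[log J₁] < 0` and, since the Cesàro
means of `log⁺ K_i` converge, `(1/n) log⁺ K_n → 0` almost surely. Hence the `n`-th term of the
series is eventually at most `exp (n E[log J₁])`, and the series converges by comparison with a
geometric one. The recursion comes from splitting off the first term. Both the sequence
`((J_k, K_k))_k` and its shift have as law the infinite product of the common marginal, and the
shift is measurable with respect to a σ-algebra independent of `(J₁, K₁)`; since `S_∞` and `S'_∞`
are the same measurable functional of these two sequences, this gives the law of `S'_∞` and its
independence from `(J₁, K₁)`.
-/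

open MeasureTheory ProbabilityTheory Filter Topology Finset Real

-- Holds at `x = 0` too, because Mathlib sets `log 0 = 0`.
lemma sq_le_exp_two_mul_log (x : ℝ) : x ^ 2 ≤ exp (2 * log x) := by
  rcases eq_or_ne x 0 with rfl | hx
  · simp
  · rw [show 2 * log x = log (x ^ 2) by rw [log_pow]; norm_num, exp_log (by positivity)]

lemma le_exp_log_max_one (y : ℝ) : y ≤ exp (log (max y 1)) := by
  rw [exp_log (lt_max_of_lt_right one_pos)]
  exact le_max_left y 1

lemma tendsto_div_natCast_zero_of_tendsto_avg {x : ℕ → ℝ} {c : ℝ}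
    (h : Tendsto (fun n : ℕ => (∑ i ∈ range n, x i) / n) atTop (𝓝 c)) :
    Tendsto (fun n : ℕ => x n / n) atTop (𝓝 0) := by
  have h_succ : Tendsto (fun n : ℕ => (∑ i ∈ range (n + 1), x i) / (n + 1 : ℕ)) atTop (𝓝 c) :=
    h.comp (tendsto_add_atTop_nat 1)
  have h_ratio : Tendsto (fun n : ℕ => 1 + 1 / (n : ℝ)) atTop (𝓝 1) := by
    simpa using tendsto_const_nhds.add (tendsto_const_div_atTop_nhds_zero_nat (1 : ℝ))
  -- `x n / n = S (n + 1) / (n + 1) * (1 + 1 / n) - S n / n`, with `S` the partial sums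
  have := (h_succ.mul h_ratio).sub h
  rw [mul_one, sub_self] at this
  refine this.congr' ?_
  filter_upwards [eventually_ge_atTop 1] with n hn
  have : (n : ℝ) ≠ 0 := by positivity
  rw [sum_range_succ]
  push_cast
  field_simp
  ring

lemma summable_of_le_exp_of_tendsto_div_natCast {u s : ℕ → ℝ} {c : ℝ} (hc : c < 0)
    (hu : ∀ n, 0 ≤ u n) (hus : ∀ n, u n ≤ exp (s n))
    (hs : Tendsto (fun n : ℕ => s n / n) atTop (𝓝 c)) : Summable u := by
  refine Summable.of_norm_bounded_eventually_nat
    (summable_geometric_of_lt_one (exp_pos (c / 2)).le (exp_lt_one_iff.2 (by linarith))) ?_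
  filter_upwards [hs.eventually_lt_const (by linarith : c < c / 2), eventually_ge_atTop 1]
    with n hn hn1
  have hn0 : (0 : ℝ) < n := by exact_mod_cast hn1
  calc ‖u n‖ = u n := Real.norm_of_nonneg (hu n)
    _ ≤ exp (s n) := hus n
    _ ≤ exp (n * (c / 2)) := exp_le_exp.2 (by rw [div_lt_iff₀ hn0] at hn; linarith)
    _ = exp (c / 2) ^ n := exp_nat_mul _ n

lemma summable_prod_sq_mul_of_tendsto {j k : ℕ → ℝ} {a b : ℝ} (ha : a < 0) (hk : ∀ n, 0 ≤ k n)
    (hj : Tendsto (fun n : ℕ => (∑ i ∈ range n, log (j i)) / n) atTop (𝓝 a))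
    (hk' : Tendsto (fun n : ℕ => (∑ i ∈ range n, log (max (k i) 1)) / n) atTop (𝓝 b)) :
    Summable fun n => (∏ i ∈ range n, j i ^ 2) * k n := by
  refine summable_of_le_exp_of_tendsto_div_natCast
    (s := fun n => 2 * ∑ i ∈ range n, log (j i) + log (max (k n) 1)) (by linarith : 2 * a < 0)
    (fun n => mul_nonneg (prod_nonneg fun i _ => sq_nonneg _) (hk n)) (fun n => ?_) ?_
  · calc (∏ i ∈ range n, j i ^ 2) * k n
        ≤ (∏ i ∈ range n, exp (2 * log (j i))) * exp (log (max (k n) 1)) :=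
          mul_le_mul (prod_le_prod (fun _ _ => sq_nonneg _) fun _ _ => sq_le_exp_two_mul_log _)
            (le_exp_log_max_one _) (hk n) (prod_nonneg fun _ _ => (exp_pos _).le)
      _ = exp (2 * ∑ i ∈ range n, log (j i) + log (max (k n) 1)) := by
          rw [← exp_sum, ← exp_add, mul_sum]
  · simpa [add_div, mul_div_assoc] using
      (hj.const_mul 2).add (tendsto_div_natCast_zero_of_tendsto_avg hk')

noncomputable def perpetuity (x : ℕ → ℝ × ℝ) : ℝ := ∑' k, (∏ i ∈ range k, (x i).1 ^ 2) * (x k).2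

lemma measurable_perpetuity : Measurable perpetuity := by
  unfold perpetuity
  fun_prop

lemma perpetuity_eq_add {x : ℕ → ℝ × ℝ}
    (hx : Summable fun k => (∏ i ∈ range k, (x i).1 ^ 2) * (x k).2) :
    perpetuity x = (x 0).2 + (x 0).1 ^ 2 * perpetuity (fun k => x (k + 1)) := by
  rw [perpetuity, hx.tsum_eq_zero_add, perpetuity, ← tsum_mul_left]
  simp only [range_zero, prod_empty, one_mul, prod_range_succ']
  congr 1
  exact tsum_congr fun k => by ring

namespace ProbabilityTheory

variable {Ω β : Type*} [MeasurableSpace Ω] [MeasurableSpace β] {μ : Measure Ω} {X : ℕ → Ω → β}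

lemma iIndepFun.identDistrib_shift (hX : ∀ k, Measurable (X k)) (h : iIndepFun X μ)
    (hident : ∀ k, IdentDistrib (X k) (X 0) μ μ) :
    IdentDistrib (fun ω k => X (k + 1) ω) (fun ω k => X k ω) μ μ where
  aemeasurable_fst := (measurable_pi_lambda _ fun k => hX (k + 1)).aemeasurable
  aemeasurable_snd := (measurable_pi_lambda _ hX).aemeasurable
  map_eq := by
    rw [(h.precomp (add_left_injective 1)).map_fun_eq_infinitePi_map (fun k => hX (k + 1)),
      h.map_fun_eq_infinitePi_map hX]
    congr 1
    funext k
    exact (hident (k + 1)).map_eq.trans (hident k).map_eq.symm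

lemma iIndepFun.indepFun_shift (hX : ∀ k, Measurable (X k)) (h : iIndepFun X μ) :
    IndepFun (fun ω k => X (k + 1) ω) (X 0) μ := by
  let σ : ℕ → MeasurableSpace Ω := fun n => MeasurableSpace.comap (X n) ‹_›
  have h_blocks : Indep (⨆ n ∈ ({0}ᶜ : Set ℕ), σ n) (⨆ n ∈ ({0} : Set ℕ), σ n) μ :=
    indep_iSup_of_disjoint (fun k => (hX k).comap_le) ((iIndepFun_iff_iIndep _ _ _).1 h)
      disjoint_compl_left
  have h_tail : ∀ k, Measurable[⨆ n ∈ ({0}ᶜ : Set ℕ), σ n] (X (k + 1)) := fun k =>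
    measurable_iff_comap_le.2 (le_iSup₂ (f := fun n (_ : n ∈ ({0}ᶜ : Set ℕ)) => σ n)
      (k + 1) k.succ_ne_zero)
  rw [IndepFun_iff_Indep]
  refine indep_of_indep_of_le_right (indep_of_indep_of_le_left h_blocks ?_) ?_
  · exact measurable_iff_comap_le.1
      ((@measurable_pi_iff Ω ℕ (fun _ => β) (⨆ n ∈ ({0}ᶜ : Set ℕ), σ n) _ _).2 h_tail)
  · exact le_iSup₂ (f := fun n (_ : n ∈ ({0} : Set ℕ)) => σ n) 0 rfl

end ProbabilityTheory

/-- Lean index `k` corresponds to the paper index `k + 1`. -/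
theorem stmt4_general {Ω : Type*} [MeasurableSpace Ω] (μ : Measure Ω) [IsProbabilityMeasure μ]
    (J K : ℕ → Ω → ℝ)
    (hmeas : ∀ k, Measurable fun ω => (J k ω, K k ω))
    (hindep : iIndepFun (fun k ω => (J k ω, K k ω)) μ)
    (hident : ∀ k, IdentDistrib (fun ω => (J k ω, K k ω)) (fun ω => (J 0 ω, K 0 ω)) μ μ)
    (hKnonneg : ∀ k, ∀ᵐ ω ∂μ, 0 ≤ K k ω)
    (hlogJint : Integrable (fun ω => Real.log (J 0 ω)) μ)
    (hlogJneg : ∫ ω, Real.log (J 0 ω) ∂μ < 0)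
    (hlogKint : Integrable (fun ω => Real.log (max (K 0 ω) 1)) μ) :
    (∀ᵐ ω ∂μ, Summable fun k => (∏ i ∈ Finset.range k, (J i ω) ^ 2) * K k ω) ∧
    (∀ᵐ ω ∂μ, (∑' k, (∏ i ∈ Finset.range k, (J i ω) ^ 2) * K k ω)
        = K 0 ω + (J 0 ω) ^ 2
            * ∑' k, (∏ i ∈ Finset.range k, (J (i + 1) ω) ^ 2) * K (k + 1) ω) ∧
    IdentDistrib
      (fun ω => ∑' k, (∏ i ∈ Finset.range k, (J (i + 1) ω) ^ 2) * K (k + 1) ω)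
      (fun ω => ∑' k, (∏ i ∈ Finset.range k, (J i ω) ^ 2) * K k ω) μ μ ∧
    IndepFun
      (fun ω => ∑' k, (∏ i ∈ Finset.range k, (J (i + 1) ω) ^ 2) * K (k + 1) ω)
      (fun ω => (J 0 ω, K 0 ω)) μ ∧
    IdentDistrib
      (fun ω => ∑' k, (∏ i ∈ Finset.range k, (J i ω) ^ 2) * K k ω)
      (fun ω => (J 0 ω) ^ 2
          * (∑' k, (∏ i ∈ Finset.range k, (J (i + 1) ω) ^ 2) * K (k + 1) ω) + K 0 ω)
      μ μ := by
  have hlogJ : Measurable fun p : ℝ × ℝ => log p.1 := by fun_prop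
  have hlogK : Measurable fun p : ℝ × ℝ => log (max p.2 1) := by fun_prop
  have hJ_avg := strong_law_ae_real (fun k ω => log (J k ω)) hlogJint
    (fun i j hij => (hindep.indepFun hij).comp hlogJ hlogJ) (fun i => (hident i).comp hlogJ)
  have hK_avg := strong_law_ae_real (fun k ω => log (max (K k ω) 1)) hlogKint
    (fun i j hij => (hindep.indepFun hij).comp hlogK hlogK) (fun i => (hident i).comp hlogK)
  have hsummable : ∀ᵐ ω ∂μ, Summable fun k => (∏ i ∈ Finset.range k, (J i ω) ^ 2) * K k ω := by
    filter_upwards [hJ_avg, hK_avg, ae_all_iff.2 hKnonneg] with ω hJω hKω hK_nonneg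
    exact summable_prod_sq_mul_of_tendsto hlogJneg hK_nonneg hJω hKω
  have hrec : ∀ᵐ ω ∂μ, (∑' k, (∏ i ∈ Finset.range k, (J i ω) ^ 2) * K k ω)
      = K 0 ω + (J 0 ω) ^ 2
          * ∑' k, (∏ i ∈ Finset.range k, (J (i + 1) ω) ^ 2) * K (k + 1) ω :=
    hsummable.mono fun ω hω => perpetuity_eq_add (x := fun k => (J k ω, K k ω)) hω
  refine ⟨hsummable, hrec, (hindep.identDistrib_shift hmeas hident).comp measurable_perpetuity,
    (hindep.indepFun_shift hmeas).comp measurable_perpetuity measurable_id, ?_⟩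
  refine .of_ae_eq (measurable_perpetuity.comp (measurable_pi_lambda _ hmeas)).aemeasurable ?_
  filter_upwards [hrec] with ω hω
  rw [hω]
  ring

/-- Let `((J_k, K_k))_{k≥1}` be i.i.d. pairs of real random variables
with `J_k > 0` a.s., `K_k ≥ 0` a.s., `E[log J₁] < 0` and `E[log⁺ K₁] < ∞`.  Then the
series `S_∞ = Σ_{k=1}^∞ (∏_{i=1}^{k-1} J_i²) K_k` converges a.s. (to a finite random
variable); writing `S'_∞ = Σ_{k=1}^∞ (∏_{i=1}^{k-1} J_{i+1}²) K_{k+1}`, one has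
`S_∞ = K₁ + J₁² S'_∞` a.s., `S'_∞` has the same distribution as `S_∞`, `S'_∞` is
independent of `(J₁, K₁)`; in particular the law of `S_∞` solves the fixed-point
equation `Z =d A Z + B` with `(A, B) = (J₁², K₁)` and `Z ⫫ (A, B)`.
(Lean index `k` corresponds to the paper index `k + 1`.) -/
theorem stmt4 {Ω : Type*} [MeasurableSpace Ω] (μ : Measure Ω) [IsProbabilityMeasure μ]
    (J K : ℕ → Ω → ℝ)
    (hmeas : ∀ k, Measurable fun ω => (J k ω, K k ω))
    (hindep : iIndepFun (fun k ω => (J k ω, K k ω)) μ)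
    (hident : ∀ k, IdentDistrib (fun ω => (J k ω, K k ω)) (fun ω => (J 0 ω, K 0 ω)) μ μ)
    (hJpos : ∀ k, ∀ᵐ ω ∂μ, 0 < J k ω)
    (hKnonneg : ∀ k, ∀ᵐ ω ∂μ, 0 ≤ K k ω)
    (hlogJint : Integrable (fun ω => Real.log (J 0 ω)) μ)
    (hlogJneg : ∫ ω, Real.log (J 0 ω) ∂μ < 0)
    (hlogKint : Integrable (fun ω => Real.log (max (K 0 ω) 1)) μ) :
    (∀ᵐ ω ∂μ, Summable fun k => (∏ i ∈ Finset.range k, (J i ω) ^ 2) * K k ω) ∧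
    (∀ᵐ ω ∂μ, (∑' k, (∏ i ∈ Finset.range k, (J i ω) ^ 2) * K k ω)
        = K 0 ω + (J 0 ω) ^ 2
            * ∑' k, (∏ i ∈ Finset.range k, (J (i + 1) ω) ^ 2) * K (k + 1) ω) ∧
    IdentDistrib
      (fun ω => ∑' k, (∏ i ∈ Finset.range k, (J (i + 1) ω) ^ 2) * K (k + 1) ω)
      (fun ω => ∑' k, (∏ i ∈ Finset.range k, (J i ω) ^ 2) * K k ω) μ μ ∧
    IndepFun
      (fun ω => ∑' k, (∏ i ∈ Finset.range k, (J (i + 1) ω) ^ 2) * K (k + 1) ω)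
      (fun ω => (J 0 ω, K 0 ω)) μ ∧
    IdentDistrib
      (fun ω => ∑' k, (∏ i ∈ Finset.range k, (J i ω) ^ 2) * K k ω)
      (fun ω => (J 0 ω) ^ 2
          * (∑' k, (∏ i ∈ Finset.range k, (J (i + 1) ω) ^ 2) * K (k + 1) ω) + K 0 ω)
      μ μ :=
  stmt4_general μ J K hmeas hindep hident hKnonneg hlogJint hlogJneg hlogKint
end

section
/- Let (ξ_k)_{k≥1} be an i.i.d. sequence of real random variables with E[ξ₁] = 0 and Var(ξ₁) = σ² ∈ (0, ∞). Let S_k = ξ_1 + ⋯ + ξ_k and M_n = max_{1≤k≤n} S_k. Then the sequence (M_n/√n) satisfies Anscombe's uniform continuity in probability condition: for every γ > 0 and η > 0 there exist δ > 0 and n₀ ∈ ℕ such that for all n ≥ n₀, P[ max_{k∈ℕ, |k−n| < δn} | M_k/√k − M_n/√n | > γ ] < η. -/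
open MeasureTheory ProbabilityTheory Filter Topology

/-- `runMax ξ n = max_{1 ≤ k ≤ n} S_k` where `S_k = ξ_1 + ⋯ + ξ_k` is the `k`-th partial
sum (the paper's `ξ_k` is `ξ (k-1)` in Lean, so `S_k = ∑ i ∈ Finset.range k, ξ i`);
by convention `runMax ξ 0 = 0`. -/
noncomputable def runMax (ξ : ℕ → ℝ) (n : ℕ) : ℝ :=
  if h : n = 0 then 0
  else (Finset.range n).sup' (Finset.nonempty_range_iff.mpr h)
    (fun j => ∑ i ∈ Finset.range (j + 1), ξ i)

/-!
Every `k` with `|k - n| < δ n` lies in `[n - t, n + t]` for `t = ⌈δ n⌉`, so `|M_k - M_n|` is at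
most the largest increment `|S_{n-t+j} - S_{n-t}|`, `j ≤ 2t`, while `|1/√k - 1/√n| ≤ δ/√k`.
Hence a deviation larger than `γ` forces either an increment of size `γ√n/4` over `2t ≈ 2δn`
steps, or `max_{j ≤ n} |S_j| ≥ γ√n/(4δ)`. Doob's maximal inequality for the submartingale
`|S_j|`, together with `E|S_m| ≤ σ√m`, bounds the two probabilities by `8σ√δ/γ` and `4σδ/γ`.
-/

open Finset

theorem abs_sqrt_sub_sqrt_le {x y δ : ℝ} (hx : 0 < x) (hy : 0 ≤ y) (h : |y - x| ≤ δ * x) :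
    |√x - √y| ≤ δ * √x := by
  have hsum : 0 < √x + √y := by positivity
  have hdiff : |√x - √y| * (√x + √y) = |y - x| := by
    rw [← abs_of_pos hsum, ← abs_mul, abs_sub_comm]
    congr 1
    nlinarith [Real.sq_sqrt hx.le, Real.sq_sqrt hy]
  have hδ : 0 ≤ δ := by
    by_contra hneg
    nlinarith [abs_nonneg (y - x)]
  refine le_of_mul_le_mul_right ?_ hsum
  calc |√x - √y| * (√x + √y) = |y - x| := hdiff
    _ ≤ δ * (√x * √x) := by rwa [Real.mul_self_sqrt hx.le]
    _ ≤ δ * √x * (√x + √y) := by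
        nlinarith [mul_nonneg (mul_nonneg hδ (Real.sqrt_nonneg x)) (Real.sqrt_nonneg y)]

theorem abs_div_sqrt_sub_div_sqrt_le {x y k n δ : ℝ} (hk : 0 < k) (hn : 0 < n)
    (hkn : |k - n| ≤ δ * n) :
    |x / √k - y / √n| ≤ (|x - y| + δ * |y|) / √k := by
  have hsk : 0 < √k := Real.sqrt_pos.mpr hk
  have hsn : 0 < √n := Real.sqrt_pos.mpr hn
  have hsplit : x / √k - y / √n = (x - y) / √k + y * (√n - √k) / √n / √k := by
    field_simp
    ring
  rw [hsplit, add_div]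
  refine (abs_add_le _ _).trans (add_le_add (by rw [abs_div, abs_of_pos hsk]) ?_)
  rw [abs_div, abs_div, abs_of_pos hsk, abs_of_pos hsn, abs_mul]
  gcongr
  rw [div_le_iff₀ hsn]
  calc |y| * |√n - √k| ≤ |y| * (δ * √n) :=
        mul_le_mul_of_nonneg_left (abs_sqrt_sub_sqrt_le hn hk.le hkn) (abs_nonneg y)
    _ = δ * |y| * √n := by ring

theorem le_runMax (f : ℕ → ℝ) {j n : ℕ} (h1 : 1 ≤ j) (h2 : j ≤ n) :
    ∑ i ∈ range j, f i ≤ runMax f n := by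
  rw [runMax, dif_neg (by omega)]
  simpa only [Nat.sub_add_cancel h1] using
    le_sup' (fun j => ∑ i ∈ range (j + 1), f i) (mem_range.mpr (by omega : j - 1 < n))

theorem exists_runMax_eq (f : ℕ → ℝ) {n : ℕ} (hn : n ≠ 0) :
    ∃ j, 1 ≤ j ∧ j ≤ n ∧ runMax f n = ∑ i ∈ range j, f i := by
  rw [runMax, dif_neg hn]
  obtain ⟨i, hi, h⟩ := exists_mem_eq_sup' (nonempty_range_iff.mpr hn)
    (fun j => ∑ i ∈ range (j + 1), f i)
  exact ⟨i + 1, by omega, mem_range.mp hi, h⟩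

theorem runMax_mono (f : ℕ → ℝ) {p q : ℕ} (hp : p ≠ 0) (hpq : p ≤ q) :
    runMax f p ≤ runMax f q := by
  obtain ⟨j, h1, h2, h3⟩ := exists_runMax_eq f hp
  exact h3 ▸ le_runMax f h1 (h2.trans hpq)

theorem abs_runMax_le (f : ℕ → ℝ) {n : ℕ} {L : ℝ} (hn : n ≠ 0)
    (h : ∀ j < n, |∑ i ∈ range (j + 1), f i| ≤ L) : |runMax f n| ≤ L := by
  obtain ⟨j, h1, h2, h3⟩ := exists_runMax_eq f hn
  simpa only [h3, Nat.sub_add_cancel h1] using h (j - 1) (by omega)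

theorem runMax_le_runMax_add (f : ℕ → ℝ) {a b : ℕ} {L : ℝ} (hL : 0 ≤ L) (ha : a ≠ 0)
    (hab : a ≤ b) (h : ∀ j < b - a, ∑ i ∈ range (j + 1), f (a + i) ≤ L) :
    runMax f b ≤ runMax f a + L := by
  obtain ⟨j, h1, h2, h3⟩ := exists_runMax_eq f (by omega : b ≠ 0)
  rw [h3]
  rcases le_or_gt j a with hja | haj
  · linarith [le_runMax f h1 hja]
  · obtain ⟨l, rfl⟩ : ∃ l, j = a + (l + 1) := ⟨j - a - 1, by omega⟩
    rw [sum_range_add]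
    linarith [le_runMax f (Nat.one_le_iff_ne_zero.mpr ha) le_rfl, h l (by omega)]

theorem abs_runMax_div_sqrt_sub_le (f : ℕ → ℝ) {n t k : ℕ} {δ L : ℝ} (hδ : 0 < δ)
    (hδ' : δ ≤ 1 / 2) (ht : δ * n ≤ t) (htn : t < n)
    (h₁ : ∀ j < 2 * t, |∑ i ∈ range (j + 1), f (n - t + i)| ≤ L)
    (h₂ : ∀ j < n, |∑ i ∈ range (j + 1), f i| ≤ L / δ) (hk : |(k : ℝ) - n| < δ * n) :
    |runMax f k / √k - runMax f n / √n| ≤ 3 * L / √n := by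
  have hn : (0 : ℝ) < n := by exact_mod_cast (Nat.zero_le t).trans_lt htn
  have hkn : (n : ℝ) / 2 < k := by nlinarith [(abs_lt.mp hk).1]
  have hk0 : (0 : ℝ) < k := by linarith
  have hL : 0 ≤ L := by
    have := (abs_nonneg _).trans (h₂ 0 (by omega))
    rwa [le_div_iff₀ hδ, zero_mul] at this
  obtain ⟨hak, hkb⟩ : n - t ≤ k ∧ k ≤ n + t := by
    have h := abs_lt.mp (hk.trans_le ht)
    constructor
    · have : n < k + t := by exact_mod_cast (by linarith : (n : ℝ) < k + t)
      omega
    · exact_mod_cast (by linarith : (k : ℝ) ≤ n + t)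
  have hM : |runMax f k - runMax f n| ≤ L := by
    have ha : n - t ≠ 0 := by omega
    have hb : runMax f (n + t) ≤ runMax f (n - t) + L :=
      runMax_le_runMax_add f hL ha (by omega) fun j hj =>
        (le_abs_self _).trans (h₁ j (by omega))
    have := runMax_mono f ha hak
    have := runMax_mono f (by omega) hkb
    have := runMax_mono f ha (Nat.sub_le n t)
    have := runMax_mono f (by omega) (Nat.le_add_right n t)
    exact abs_le.mpr ⟨by linarith, by linarith⟩
  have hMn : δ * |runMax f n| ≤ L := by
    rw [mul_comm, ← le_div_iff₀ hδ]
    exact abs_runMax_le f (by omega) h₂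
  have hsqrt : 2 * √n ≤ 3 * √k := by
    nlinarith [Real.sq_sqrt hn.le, Real.sq_sqrt hk0.le, Real.sqrt_nonneg n, Real.sqrt_nonneg k]
  calc |runMax f k / √k - runMax f n / √n|
      ≤ (|runMax f k - runMax f n| + δ * |runMax f n|) / √k :=
        abs_div_sqrt_sub_div_sqrt_le hk0 hn hk.le
    _ ≤ 2 * L / √k := by gcongr; linarith
    _ ≤ 3 * L / √n := by
        rw [div_le_div_iff₀ (Real.sqrt_pos.mpr hk0) (Real.sqrt_pos.mpr hn)]
        nlinarith

section MaximalInequality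

variable {Ω : Type*} [MeasurableSpace Ω] {μ : Measure Ω} {ξ : ℕ → Ω → ℝ}

theorem martingale_sum_range_succ (hsm : ∀ i, StronglyMeasurable (ξ i))
    (hindep : iIndepFun ξ μ) (hint : ∀ i, Integrable (ξ i) μ) (hmean : ∀ i, μ[ξ i] = 0) :
    Martingale (fun n => ∑ i ∈ range (n + 1), ξ i) (Filtration.natural ξ hsm) μ := by
  have := hindep.isProbabilityMeasure
  refine martingale_of_condExp_sub_eq_zero_nat (fun n => ?_)
    (fun n => integrable_finsetSum' _ fun i _ => hint i) fun n => ?_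
  · exact Finset.stronglyMeasurable_sum _ fun i hi =>
      (Filtration.stronglyAdapted_natural hsm i).mono
        (Filtration.mono _ (Nat.lt_succ_iff.mp (mem_range.mp hi)))
  · rw [sum_range_succ, add_sub_cancel_left]
    filter_upwards [hindep.condExp_natural_ae_eq_of_lt hsm (Nat.lt_succ_self n)] with ω hω
    rw [hω, hmean]; rfl

theorem ofReal_mul_measure_exists_abs_sum_ge_le (hmeas : ∀ i, Measurable (ξ i))
    (hindep : iIndepFun ξ μ) (hint : ∀ i, Integrable (ξ i) μ) (hmean : ∀ i, μ[ξ i] = 0)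
    {c : ℝ} (hc : 0 ≤ c) (n : ℕ) :
    ENNReal.ofReal c * μ {ω | ∃ k ≤ n, c ≤ |∑ i ∈ range (k + 1), ξ i ω|}
      ≤ ENNReal.ofReal (∫ ω, |∑ i ∈ range (n + 1), ξ i ω| ∂μ) := by
  have := hindep.isProbabilityMeasure
  have hmart := martingale_sum_range_succ (fun i => (hmeas i).stronglyMeasurable) hindep hint hmean
  have habs : Submartingale (fun n ω => |∑ i ∈ range (n + 1), ξ i ω|)
      (Filtration.natural ξ fun i => (hmeas i).stronglyMeasurable) μ := by
    convert hmart.submartingale.sup hmart.neg.submartingale using 1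
    · rfl
    · ext n ω
      simp [abs_eq_max_neg]
  have hdoob := maximal_ineq habs (fun n ω => abs_nonneg _) (ε := c.toNNReal) n
  have hset : {ω | ∃ k ≤ n, c ≤ |∑ i ∈ range (k + 1), ξ i ω|} = {ω | (c.toNNReal : ℝ) ≤
      (range (n + 1)).sup' nonempty_range_add_one fun k => |∑ i ∈ range (k + 1), ξ i ω|} := by
    ext ω
    simp [le_sup'_iff, Real.coe_toNNReal _ hc]
  rw [hset]
  exact hdoob.trans (ENNReal.ofReal_le_ofReal (setIntegral_le_integral (habs.integrable n)
    (ae_of_all _ fun ω => abs_nonneg _)))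

theorem integral_abs_le_sqrt_variance [IsProbabilityMeasure μ] {X : Ω → ℝ} (hX : MemLp X 2 μ)
    (hmean : μ[X] = 0) : ∫ ω, |X ω| ∂μ ≤ √(variance X μ) := by
  have h := variance_nonneg |X| μ
  rw [variance_eq_sub hX.abs] at h
  rw [variance_eq_sub hX, hmean]
  refine Real.le_sqrt_of_sq_le ?_
  simpa [sq_abs] using h

theorem integral_abs_sum_range_le (hindep : iIndepFun ξ μ) (hL2 : ∀ i, MemLp (ξ i) 2 μ)
    (hmean : ∀ i, μ[ξ i] = 0) {v : ℝ} (hvar : ∀ i, variance (ξ i) μ ≤ v) (n : ℕ) :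
    ∫ ω, |∑ i ∈ range n, ξ i ω| ∂μ ≤ √(n * v) := by
  have := hindep.isProbabilityMeasure
  have hsum : (fun ω => ∑ i ∈ range n, ξ i ω) = ∑ i ∈ range n, ξ i := by ext; simp
  calc ∫ ω, |∑ i ∈ range n, ξ i ω| ∂μ ≤ √(variance (∑ i ∈ range n, ξ i) μ) := by
        rw [← hsum]
        refine integral_abs_le_sqrt_variance ?_ ?_
        · rw [hsum]; exact memLp_finsetSum' _ fun i _ => hL2 i
        · rw [integral_finsetSum _ fun i _ => (hL2 i).integrable one_le_two]
          simp [hmean]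
    _ ≤ √(n * v) := by
        refine Real.sqrt_le_sqrt ?_
        rw [IndepFun.variance_sum (fun i _ => hL2 i) fun i _ j _ hij => hindep.indepFun hij]
        simpa using sum_le_sum fun i (_ : i ∈ range n) => hvar i

theorem measure_exists_abs_sum_ge_le (hmeas : ∀ i, Measurable (ξ i)) (hindep : iIndepFun ξ μ)
    (hL2 : ∀ i, MemLp (ξ i) 2 μ) (hmean : ∀ i, μ[ξ i] = 0) {v : ℝ}
    (hvar : ∀ i, variance (ξ i) μ ≤ v) {c : ℝ} (hc : 0 < c) (n : ℕ) :
    μ {ω | ∃ k < n, c ≤ |∑ i ∈ range (k + 1), ξ i ω|} ≤ ENNReal.ofReal (√(n * v) / c) := by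
  have := hindep.isProbabilityMeasure
  obtain _ | m := n
  · simp
  have hdoob := ofReal_mul_measure_exists_abs_sum_ge_le hmeas hindep
    (fun i => (hL2 i).integrable one_le_two) hmean hc.le m
  simp_rw [Nat.lt_succ_iff]
  rw [ENNReal.ofReal_div_of_pos hc, ENNReal.le_div_iff_mul_le (by simp [hc]) (by simp), mul_comm]
  exact hdoob.trans (ENNReal.ofReal_le_ofReal (integral_abs_sum_range_le hindep hL2 hmean hvar _))

theorem measure_exists_abs_sum_shift_ge_le (hmeas : ∀ i, Measurable (ξ i))
    (hindep : iIndepFun ξ μ) (hident : ∀ i, IdentDistrib (ξ i) (ξ 0) μ μ)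
    (hmean : μ[ξ 0] = 0) (hsqint : Integrable (fun ω => ξ 0 ω ^ 2) μ) {σ : ℝ} (hσ : 0 ≤ σ)
    (hvar : ∫ ω, ξ 0 ω ^ 2 ∂μ = σ ^ 2) (a : ℕ) {c : ℝ} (hc : 0 < c) (n : ℕ) :
    μ {ω | ∃ k < n, c ≤ |∑ i ∈ range (k + 1), ξ (a + i) ω|} ≤ ENNReal.ofReal (σ * √n / c) := by
  have := hindep.isProbabilityMeasure
  have hL2₀ : MemLp (ξ 0) 2 μ :=
    (memLp_two_iff_integrable_sq (hmeas 0).aestronglyMeasurable).2 hsqint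
  have hL2 : ∀ i, MemLp (ξ (a + i)) 2 μ := fun i => (hident (a + i)).symm.memLp_snd hL2₀
  have hvar₀ : variance (ξ 0) μ = σ ^ 2 := by
    rw [variance_eq_sub hL2₀, hmean]
    simpa using hvar
  have h := measure_exists_abs_sum_ge_le (fun i => hmeas (a + i))
    (hindep.precomp (add_right_injective a)) hL2
    (fun i => (hident (a + i)).integral_eq.trans hmean)
    (fun i => ((hident (a + i)).variance_eq.trans hvar₀).le) hc n
  rwa [Real.sqrt_mul (Nat.cast_nonneg n), Real.sqrt_sq hσ, mul_comm] at h

theorem measure_exists_abs_runMax_div_sqrt_sub_gt_le (hmeas : ∀ i, Measurable (ξ i))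
    (hindep : iIndepFun ξ μ) (hident : ∀ i, IdentDistrib (ξ i) (ξ 0) μ μ)
    (hmean : μ[ξ 0] = 0) (hsqint : Integrable (fun ω => ξ 0 ω ^ 2) μ) {σ : ℝ} (hσ : 0 ≤ σ)
    (hvar : ∫ ω, ξ 0 ω ^ 2 ∂μ = σ ^ 2) {γ δ L : ℝ} {n t : ℕ} (hδ : 0 < δ) (hδ' : δ ≤ 1 / 2)
    (ht : δ * n ≤ t) (htn : t < n) (hL : 0 < L) (hLγ : 3 * L ≤ γ * √n) :
    μ {ω | ∃ k : ℕ, |(k : ℝ) - n| < δ * n ∧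
        γ < |runMax (fun i => ξ i ω) k / √k - runMax (fun i => ξ i ω) n / √n|}
      ≤ ENNReal.ofReal (σ * √(2 * t : ℕ) / L) + ENNReal.ofReal (σ * √n / (L / δ)) := by
  have hsub : {ω | ∃ k : ℕ, |(k : ℝ) - n| < δ * n ∧
      γ < |runMax (fun i => ξ i ω) k / √k - runMax (fun i => ξ i ω) n / √n|} ⊆
      {ω | ∃ k < 2 * t, L ≤ |∑ i ∈ range (k + 1), ξ (n - t + i) ω|} ∪
      {ω | ∃ k < n, L / δ ≤ |∑ i ∈ range (k + 1), ξ (0 + i) ω|} := by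
    rintro ω ⟨k, hk, hγk⟩
    by_contra hω
    simp only [Set.mem_union, Set.mem_ofPred_eq, not_or, not_exists, not_and, not_le,
      zero_add] at hω
    have hn : (0 : ℝ) < √n := Real.sqrt_pos.mpr (by exact_mod_cast (Nat.zero_le t).trans_lt htn)
    refine hγk.not_ge ((abs_runMax_div_sqrt_sub_le _ hδ hδ' ht htn
      (fun j hj => (hω.1 j hj).le) (fun j hj => (hω.2 j hj).le) hk).trans ?_)
    rwa [div_le_iff₀ hn]
  refine (measure_mono hsub).trans ((measure_union_le _ _).trans (add_le_add ?_ ?_)) <;>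
    exact measure_exists_abs_sum_shift_ge_le hmeas hindep hident hmean hsqint hσ hvar _
      (by positivity) _

end MaximalInequality

theorem sqrt_div_add_sqrt_div_lt {σ γ η ε m n : ℝ} (hσ : 0 < σ) (hγ : 0 < γ) (hε0 : 0 < ε)
    (hε1 : ε ≤ 1) (hε : ε * (13 * σ) ≤ γ * η) (hn : 0 < n) (hm : m ≤ 4 * ε ^ 2 * n) :
    σ * √m / (γ * √n / 4) + σ * √n / (γ * √n / 4 / ε ^ 2) < η := by
  have hsn : 0 < √n := Real.sqrt_pos.mpr hn
  have hsm : √m ≤ 2 * ε * √n :=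
    Real.sqrt_le_iff.mpr ⟨by positivity, by nlinarith [Real.sq_sqrt hn.le]⟩
  have h₁ : σ * √m / (γ * √n / 4) ≤ 8 * σ * ε / γ := by
    rw [div_le_div_iff₀ (by positivity) hγ]
    nlinarith [mul_le_mul_of_nonneg_left hsm hσ.le]
  have h₂ : σ * √n / (γ * √n / 4 / ε ^ 2) = 4 * σ * ε ^ 2 / γ := by
    field_simp
  have h₃ : 8 * σ * ε / γ + 4 * σ * ε ^ 2 / γ < η := by
    rw [← add_div, div_lt_iff₀ hγ]
    nlinarith [mul_pos hσ hε0]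
  linarith

theorem stmt8_general {Ω : Type*} [MeasurableSpace Ω] (μ : Measure Ω) [IsProbabilityMeasure μ]
    (ξ : ℕ → Ω → ℝ) (σ : ℝ) (hσ : 0 < σ)
    (hmeas : ∀ k, Measurable (ξ k))
    (hindep : iIndepFun ξ μ)
    (hident : ∀ k, IdentDistrib (ξ k) (ξ 0) μ μ)
    (hmean : ∫ ω, ξ 0 ω ∂μ = 0)
    (hsqint : Integrable (fun ω => (ξ 0 ω) ^ 2) μ)
    (hvar : ∫ ω, (ξ 0 ω) ^ 2 ∂μ = σ ^ 2) :
    ∀ γ > (0 : ℝ), ∀ η > (0 : ℝ), ∃ δ > (0 : ℝ), ∃ n₀ : ℕ, ∀ n ≥ n₀,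
      μ {ω | ∃ k : ℕ, |(k : ℝ) - (n : ℝ)| < δ * n ∧
          γ < |runMax (fun i => ξ i ω) k / Real.sqrt k
                - runMax (fun i => ξ i ω) n / Real.sqrt n|}
        < ENNReal.ofReal η := by
  intro γ hγ η hη
  set ε := min (1 / 2 : ℝ) (γ * η / (13 * σ))
  have hε0 : 0 < ε := lt_min (by norm_num) (by positivity)
  have hε1 : ε ≤ 1 / 2 := min_le_left _ _
  have hε2 : ε ^ 2 ≤ 1 / 4 := by nlinarith
  have hε : ε * (13 * σ) ≤ γ * η := (le_div_iff₀ (by positivity)).mp (min_le_right _ _)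
  refine ⟨ε ^ 2, by positivity, ⌈(ε ^ 2)⁻¹⌉₊, fun n hn => ?_⟩
  have hεn : 1 ≤ ε ^ 2 * n := (inv_le_iff_one_le_mul₀' (by positivity)).mp (Nat.ceil_le.mp hn)
  have hn0 : (0 : ℝ) < n := by nlinarith
  have ht : (⌈ε ^ 2 * n⌉₊ : ℝ) ≤ 2 * (ε ^ 2 * n) := Nat.ceil_le_two_mul (by linarith)
  have htn : ⌈ε ^ 2 * n⌉₊ < n := by
    exact_mod_cast (by nlinarith : (⌈ε ^ 2 * n⌉₊ : ℝ) < n)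
  refine (measure_exists_abs_runMax_div_sqrt_sub_gt_le hmeas hindep hident hmean hsqint hσ.le
    hvar (L := γ * √n / 4) (by positivity) (by linarith) (Nat.le_ceil _) htn (by positivity)
    (by nlinarith [Real.sqrt_nonneg n])).trans_lt ?_
  rw [← ENNReal.ofReal_add (by positivity) (by positivity), ENNReal.ofReal_lt_ofReal_iff hη]
  exact sqrt_div_add_sqrt_div_lt hσ hγ hε0 (by linarith) hε hn0 (by push_cast; linarith)

/-- **Anscombe's condition for the running maximum.**
Let `(ξ_k)_{k≥1}` be i.i.d. real random variables with `E[ξ₁] = 0` and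
`Var(ξ₁) = σ² ∈ (0, ∞)`, and let `M_n = max_{1≤k≤n} S_k` with `S_k = ξ_1 + ⋯ + ξ_k`.
Then `(M_n/√n)` is uniformly continuous in probability: for every `γ > 0` and `η > 0`
there exist `δ > 0` and `n₀` such that for all `n ≥ n₀`,
`P[ max_{k : |k−n| < δn} |M_k/√k − M_n/√n| > γ ] < η`
(the event being expressed by an existential over `k`). -/
theorem stmt8 {Ω : Type*} [MeasurableSpace Ω] (μ : Measure Ω) [IsProbabilityMeasure μ]
    (ξ : ℕ → Ω → ℝ) (σ : ℝ) (hσ : 0 < σ)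
    (hmeas : ∀ k, Measurable (ξ k))
    (hindep : iIndepFun ξ μ)
    (hident : ∀ k, IdentDistrib (ξ k) (ξ 0) μ μ)
    (hint : Integrable (ξ 0) μ)
    (hmean : ∫ ω, ξ 0 ω ∂μ = 0)
    (hsqint : Integrable (fun ω => (ξ 0 ω) ^ 2) μ)
    (hvar : ∫ ω, (ξ 0 ω) ^ 2 ∂μ = σ ^ 2) :
    ∀ γ > (0 : ℝ), ∀ η > (0 : ℝ), ∃ δ > (0 : ℝ), ∃ n₀ : ℕ, ∀ n ≥ n₀,
      μ {ω | ∃ k : ℕ, |(k : ℝ) - (n : ℝ)| < δ * n ∧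
          γ < |runMax (fun i => ξ i ω) k / Real.sqrt k
                - runMax (fun i => ξ i ω) n / Real.sqrt n|}
        < ENNReal.ofReal η :=
  stmt8_general μ ξ σ hσ hmeas hindep hident hmean hsqint hvar
end

section
/- Let Z, A, B be nonnegative real random variables with Z independent of the pair (A, B), such that Z has the same distribution as AZ + B. Let m ≥ 1 be an integer and suppose E[Z^m] < ∞, E[A^m] < ∞, and E[A^k B^{m−k}] < ∞ for all 0 ≤ k ≤ m−1. Then E[Z^m]·(1 − E[A^m]) = Σ_{k=0}^{m−1} binom(m, k) · E[A^k B^{m−k}] · E[Z^k]. -/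
open MeasureTheory ProbabilityTheory Filter Topology

/-!
Raise `Z =ᵈ AZ + B` to the `m`-th power and expand `(AZ + B)^m` binomially. By independence
each term `E[(AZ)^k B^(m-k)]` factors as `E[A^k B^(m-k)] E[Z^k]`, all moments being finite since
`E|Z|^k ≤ 1 + E|Z|^m`. The top term `k = m` is `E[A^m] E[Z^m]`; moving it to the left-hand side
gives the recursion.
-/

section

variable {Ω : Type*} [MeasurableSpace Ω] {μ : Measure Ω}

lemma integrable_pow_of_le [IsFiniteMeasure μ] {X : Ω → ℝ} (hX : AEStronglyMeasurable X μ)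
    {k m : ℕ} (hkm : k ≤ m) (hXm : Integrable (fun ω => X ω ^ m) μ) :
    Integrable (fun ω => X ω ^ k) μ :=
  (integrable_norm_pow_of_le hX hkm (by simpa only [norm_pow] using hXm.norm)).mono'
    (hX.pow k) (ae_of_all _ fun ω => (norm_pow (X ω) k).le)

lemma integral_mul_add_pow_eq_sum_of_indepFun {Z A B : Ω → ℝ}
    (hindep : IndepFun Z (fun ω => (A ω, B ω)) μ) (m : ℕ)
    (hZ : ∀ k ≤ m, Integrable (fun ω => Z ω ^ k) μ)
    (hAB : ∀ k ≤ m, Integrable (fun ω => A ω ^ k * B ω ^ (m - k)) μ) :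
    ∫ ω, (A ω * Z ω + B ω) ^ m ∂μ = ∑ k ∈ Finset.range (m + 1),
      (m.choose k : ℝ) * (∫ ω, A ω ^ k * B ω ^ (m - k) ∂μ) * ∫ ω, Z ω ^ k ∂μ := by
  have hind (k : ℕ) :
      IndepFun (fun ω => A ω ^ k * B ω ^ (m - k)) (fun ω => Z ω ^ k) μ :=
    (hindep.comp (measurable_id.pow_const k)
      ((measurable_fst.pow_const k).mul (measurable_snd.pow_const (m - k)))).symm
  have hexpand (ω : Ω) : (A ω * Z ω + B ω) ^ m = ∑ k ∈ Finset.range (m + 1),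
      (m.choose k : ℝ) * ((A ω ^ k * B ω ^ (m - k)) * Z ω ^ k) := by
    rw [add_pow]
    refine Finset.sum_congr rfl fun k _ => ?_
    ring
  simp_rw [hexpand]
  rw [integral_finsetSum]
  · refine Finset.sum_congr rfl fun k hk => ?_
    have hkm : k ≤ m := Finset.mem_range_succ_iff.mp hk
    rw [integral_const_mul, mul_assoc]
    exact congrArg _ ((hind k).integral_mul_eq_mul_integral
      (hAB k hkm).aestronglyMeasurable (hZ k hkm).aestronglyMeasurable)
  · intro k hk
    have hkm : k ≤ m := Finset.mem_range_succ_iff.mp hk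
    exact ((hind k).integrable_mul (hAB k hkm) (hZ k hkm)).const_mul _

end

theorem stmt13_general {Ω : Type*} [MeasurableSpace Ω] (μ : Measure Ω) [IsProbabilityMeasure μ]
    (Z A B : Ω → ℝ)
    (hindep : IndepFun Z (fun ω => (A ω, B ω)) μ)
    (hfix : IdentDistrib Z (fun ω => A ω * Z ω + B ω) μ μ)
    (m : ℕ)
    (hZm : Integrable (fun ω => Z ω ^ m) μ)
    (hAm : Integrable (fun ω => A ω ^ m) μ)
    (hABk : ∀ k ≤ m - 1, Integrable (fun ω => A ω ^ k * B ω ^ (m - k)) μ) :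
    (∫ ω, Z ω ^ m ∂μ) * (1 - ∫ ω, A ω ^ m ∂μ)
      = ∑ k ∈ Finset.range m,
          (m.choose k : ℝ) * (∫ ω, A ω ^ k * B ω ^ (m - k) ∂μ) * ∫ ω, Z ω ^ k ∂μ := by
  have hZk (k : ℕ) (hk : k ≤ m) : Integrable (fun ω => Z ω ^ k) μ :=
    integrable_pow_of_le hfix.aemeasurable_fst.aestronglyMeasurable hk hZm
  have hAB (k : ℕ) (hk : k ≤ m) : Integrable (fun ω => A ω ^ k * B ω ^ (m - k)) μ := by
    rcases hk.eq_or_lt with rfl | hlt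
    · simpa using hAm
    · exact hABk k (by omega)
  have key := (hfix.comp (measurable_id.pow_const m)).integral_eq.trans
    (integral_mul_add_pow_eq_sum_of_indepFun hindep m hZk hAB)
  simp only [Function.comp_def, id, Finset.sum_range_succ, Nat.choose_self, Nat.sub_self,
    pow_zero, mul_one, Nat.cast_one, one_mul] at key
  linarith

/-- **moment recursion for the fixed point of `Z =d AZ + B`.**
Let `Z, A, B` be nonnegative real random variables with `Z` independent of the pair
`(A, B)` and `Z =d AZ + B`.  Let `m ≥ 1` and suppose `E[Z^m] < ∞`, `E[A^m] < ∞` and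
`E[A^k B^{m−k}] < ∞` for all `0 ≤ k ≤ m − 1`.  Then
`E[Z^m]·(1 − E[A^m]) = Σ_{k=0}^{m−1} C(m,k) · E[A^k B^{m−k}] · E[Z^k]`. -/
theorem stmt13 {Ω : Type*} [MeasurableSpace Ω] (μ : Measure Ω) [IsProbabilityMeasure μ]
    (Z A B : Ω → ℝ)
    (hZmeas : Measurable Z) (hAmeas : Measurable A) (hBmeas : Measurable B)
    (hZnn : ∀ᵐ ω ∂μ, 0 ≤ Z ω) (hAnn : ∀ᵐ ω ∂μ, 0 ≤ A ω) (hBnn : ∀ᵐ ω ∂μ, 0 ≤ B ω)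
    (hindep : IndepFun Z (fun ω => (A ω, B ω)) μ)
    (hfix : IdentDistrib Z (fun ω => A ω * Z ω + B ω) μ μ)
    (m : ℕ) (hm : 1 ≤ m)
    (hZm : Integrable (fun ω => Z ω ^ m) μ)
    (hAm : Integrable (fun ω => A ω ^ m) μ)
    (hABk : ∀ k ≤ m - 1, Integrable (fun ω => A ω ^ k * B ω ^ (m - k)) μ) :
    (∫ ω, Z ω ^ m ∂μ) * (1 - ∫ ω, A ω ^ m ∂μ)
      = ∑ k ∈ Finset.range m,
          (m.choose k : ℝ) * (∫ ω, A ω ^ k * B ω ^ (m - k) ∂μ) * ∫ ω, Z ω ^ k ∂μ :=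
  stmt13_general μ Z A B hindep hfix m hZm hAm hABk
end
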